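/- arXiv:1911.07895 — 2 statements merged into one kernel-verified Lean document; each statement's English description precedes it below -/
import Mathlib

section
/- In a symmetric monoidal category with braiding β, given an adjoint structure (𝔤, τ), the induced bracket τ_𝔤 : 𝔤 ⊗ 𝔤 → 𝔤 satisfies the Jacobi identity τ_𝔤 ∘ (τ_𝔤 ⊗ id) = τ_𝔤 ∘ (id ⊗ τ_𝔤) − τ_𝔤 ∘ (id ⊗ τ_𝔤) ∘ (β_{𝔤,𝔤} ⊗ id), i.e., (𝔤, τ_𝔤) is a Lie algebra internal to the category. -/
open CategoryTheory CategoryTheory.MonoidalCategory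

/-- In a symmetric monoidal (preadditive) category, an adjoint structure `(𝔤, τ)` —
i.e. natural actions `τ_a : 𝔤 ⊗ a ⟶ a` satisfying the Leibniz tensor rule and
antisymmetry of `τ_𝔤` — has a bracket `τ_𝔤 : 𝔤 ⊗ 𝔤 ⟶ 𝔤` satisfying the Jacobi
identity:
`τ_𝔤 ∘ (τ_𝔤 ⊗ id) = τ_𝔤 ∘ (id ⊗ τ_𝔤) − τ_𝔤 ∘ (id ⊗ τ_𝔤) ∘ (β_{𝔤,𝔤} ⊗ id)`,
so that `(𝔤, τ_𝔤)` is a Lie algebra internal to the category. -/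
theorem adjoint_bracket_jacobi {C : Type*} [Category C] [Preadditive C]
    [MonoidalCategory C] [SymmetricCategory C] [MonoidalPreadditive C]
    (g : C) (τ : ∀ a : C, g ⊗ a ⟶ a)
    (hnat : ∀ {a b : C} (f : a ⟶ b), (g ◁ f) ≫ τ b = τ a ≫ f)
    (hleib : ∀ a b : C, τ (a ⊗ b) =
      (α_ g a b).inv ≫ (τ a ▷ b) +
      (α_ g a b).inv ≫ ((β_ g a).hom ▷ b) ≫ (α_ a g b).hom ≫ (a ◁ τ b))
    (hanti : (β_ g g).hom ≫ τ g = - τ g) :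
    (τ g ▷ g) ≫ τ g =
      (α_ g g g).hom ≫ (g ◁ τ g) ≫ τ g -
      ((β_ g g).hom ▷ g) ≫ (α_ g g g).hom ≫ (g ◁ τ g) ≫ τ g := by
  have h1 : (g ◁ τ g) ≫ τ g = τ (g ⊗ g) ≫ τ g := hnat (τ g)
  have h2 : (α_ g g g).hom ≫ τ (g ⊗ g) ≫ τ g =
      (τ g ▷ g) ≫ τ g + ((β_ g g).hom ▷ g) ≫ (α_ g g g).hom ≫ τ (g ⊗ g) ≫ τ g := by
    conv_lhs => rw [hleib g g]
    simp only [Preadditive.add_comp, Preadditive.comp_add, Category.assoc,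
      Iso.hom_inv_id_assoc, h1]
  have h3 : ((β_ g g).hom ▷ g) ≫ (α_ g g g).hom ≫ τ (g ⊗ g) ≫ τ g =
      (α_ g g g).hom ≫ τ (g ⊗ g) ≫ τ g - (τ g ▷ g) ≫ τ g := by
    exact eq_sub_of_add_eq' h2.symm
  rw [h1, h3]
  abel
end

section
/- In a semisimple symmetric tensor category, if (𝔤, τ) is an adjoint and 𝔤 ≅ a_1 ⊕ ... ⊕ a_n is a decomposition into simple objects, then each summand (a_i, σ_i) with σ_i defined by restricting τ along the embedding ι_i is itself an adjoint, and τ_b = Σ_i (σ_i)_b ∘ (π_i ⊗ id_b). -/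
open CategoryTheory CategoryTheory.MonoidalCategory

/-- An adjoint `(𝔤, τ)` in a symmetric monoidal preadditive category: a family of
action morphisms `τ_a : 𝔤 ⊗ a ⟶ a`, natural in `a`, satisfying the Leibniz tensor
rule, antisymmetry of `τ_𝔤`, and the non-degeneracy condition. -/
def IsAdjoint {C : Type*} [Category C] [Preadditive C]
    [MonoidalCategory C] [SymmetricCategory C]
    (g : C) (τ : ∀ a : C, g ⊗ a ⟶ a) : Prop :=
  (∀ {a b : C} (f : a ⟶ b), (g ◁ f) ≫ τ b = τ a ≫ f) ∧
  (∀ a b : C, τ (a ⊗ b) =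
    (α_ g a b).inv ≫ (τ a ▷ b) +
    (α_ g a b).inv ≫ ((β_ g a).hom ▷ b) ≫ (α_ a g b).hom ≫ (a ◁ τ b)) ∧
  ((β_ g g).hom ≫ τ g = - τ g) ∧
  (∀ f : g ⟶ g, (∀ a : C, (f ▷ a) ≫ τ a = 0) → f = 0)

/-- If `(𝔤, τ)` is an adjoint in a semisimple symmetric tensor category and
`𝔤 ≅ a_1 ⊕ ... ⊕ a_n` is a decomposition into simple objects (witnessed by
embeddings `ι_i` and projections `π_i`), then each `(a_i, σ_i)` with
`(σ_i)_b := τ_b ∘ (ι_i ⊗ id_b)` is itself an adjoint, and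
`τ_b = Σ_i (σ_i)_b ∘ (π_i ⊗ id_b)`. -/
theorem adjoint_decomposes_into_simple_adjoints
    {C : Type*} [Category C] [Preadditive C] [CategoryTheory.Linear ℂ C]
    [MonoidalCategory C] [SymmetricCategory C] [MonoidalPreadditive C]
    [MonoidalLinear ℂ C]
    (g : C) (τ : ∀ a : C, g ⊗ a ⟶ a) (hadj : IsAdjoint g τ)
    {n : ℕ} (a : Fin n → C) (hsimple : ∀ i, Simple (a i))
    (ι : ∀ i, a i ⟶ g) (π : ∀ i, g ⟶ a i)
    (hid : ∀ i, ι i ≫ π i = 𝟙 (a i))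
    (horth : ∀ i j, i ≠ j → ι i ≫ π j = 0)
    (hsum : ∑ i, π i ≫ ι i = 𝟙 g) :
    (∀ i, IsAdjoint (a i) (fun b => ((ι i) ▷ b) ≫ τ b)) ∧
    (∀ b : C, τ b = ∑ i, ((π i) ▷ b) ≫ (((ι i) ▷ b) ≫ τ b)) := by
  obtain ⟨hnat, hleib, hanti, hnd⟩ := hadj
  constructor
  · intro i
    refine ⟨?_, ?_, ?_, ?_⟩
    · intro x y f
      dsimp only
      rw [← Category.assoc, whisker_exchange, Category.assoc, hnat,
        ← Category.assoc]
    · intro x y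
      dsimp only
      rw [hleib, Preadditive.comp_add]
      congr 1
      · slice_lhs 1 2 => rw [associator_inv_naturality_left]
        simp [comp_whiskerRight]
      · slice_lhs 1 2 => rw [associator_inv_naturality_left]
        slice_lhs 2 3 => rw [← comp_whiskerRight,
          BraidedCategory.braiding_naturality_left, comp_whiskerRight]
        slice_lhs 3 4 => rw [associator_naturality_middle]
        simp [MonoidalCategory.whiskerLeft_comp]
    · have hmono : Mono (ι i) := ⟨fun {Z} u v huv => by
        have := congrArg (· ≫ π i) huv
        simpa [hid i] using this⟩
      dsimp only
      rw [← cancel_mono (ι i)]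
      simp only [Category.assoc, Preadditive.neg_comp]
      rw [← hnat (ι i)]
      slice_lhs 1 2 => rw [← BraidedCategory.braiding_naturality_right]
      slice_lhs 2 3 => rw [← BraidedCategory.braiding_naturality_left]
      slice_lhs 3 4 => rw [hanti]
      slice_lhs 2 3 => rw [Preadditive.comp_neg]
      slice_lhs 1 2 => rw [Preadditive.comp_neg]
      rw [← Category.assoc, whisker_exchange, Category.assoc, hnat]
    · intro f hf
      have hF : (π i ≫ f ≫ ι i) = 0 := by
        apply hnd
        intro b
        have h := hf b
        dsimp only at h
        simp only [comp_whiskerRight, Category.assoc] at h ⊢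
        rw [h, Limits.comp_zero]
      calc f = (ι i ≫ π i) ≫ f ≫ (ι i ≫ π i) := by rw [hid i]; simp
        _ = ι i ≫ (π i ≫ f ≫ ι i) ≫ π i := by simp
        _ = 0 := by rw [hF]; simp
  · intro b
    have key : ∑ i, (π i) ▷ b ≫ ((ι i) ▷ b ≫ τ b)
        = ((∑ i, π i ≫ ι i) ▷ b) ≫ τ b := by
      rw [sum_whiskerRight, Preadditive.sum_comp]
      simp [comp_whiskerRight]
    rw [key, hsum, id_whiskerRight, Category.id_comp]
end
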